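/- The Demazure–Lascoux operators satisfy the 0-Hecke relations as operators on ℤ[β][z_1,…,z_n]: ϖ_i ϖ_j = ϖ_j ϖ_i whenever |i − j| > 1; ϖ_i ϖ_{i+1} ϖ_i = ϖ_{i+1} ϖ_i ϖ_{i+1} for all 1 ≤ i ≤ n−2; and ϖ_i² = ϖ_i for all 1 ≤ i ≤ n−1. -/

import Mathlib

open MvPolynomial

attribute [local instance] Classical.propDecidable

noncomputable section

/-- The polynomial ring `ℤ[β][z_1, …, z_n]`, with `β` the coefficient-ring variable. -/
abbrev Rg (n : ℕ) : Type := MvPolynomial (Fin n) (Polynomial ℤ)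

/-- The element `β`. -/
def Bg (n : ℕ) : Rg n := C Polynomial.X

/-- Exact division in `ℤ[β][z_1, …, z_n]` (returns junk `0` if not divisible). -/
def exactDiv {n : ℕ} (d g : Rg n) : Rg n :=
  if h : ∃ c : Rg n, g = d * c then h.choose else 0

/-- The ring automorphism `s_i` exchanging the variables `z_i` and `z_{i+1}`. -/
def sOp (n i : ℕ) (h : i + 1 < n) (f : Rg n) : Rg n :=
  rename (Equiv.swap (⟨i, by omega⟩ : Fin n) ⟨i + 1, h⟩) f

/-- Numerator of the Demazure--Lascoux operator. -/
def DLnum (n i : ℕ) (h : i + 1 < n) (f : Rg n) : Rg n :=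
  (X (⟨i, by omega⟩ : Fin n) + Bg n * X (⟨i, by omega⟩ : Fin n) * X ⟨i + 1, h⟩) * f
    - (X ⟨i + 1, h⟩ + Bg n * X (⟨i, by omega⟩ : Fin n) * X ⟨i + 1, h⟩) * sOp n i h f

/-- The Demazure--Lascoux operator `ϖ_i`. -/
def DL (n i : ℕ) (h : i + 1 < n) (f : Rg n) : Rg n :=
  exactDiv (X (⟨i, by omega⟩ : Fin n) - X ⟨i + 1, h⟩) (DLnum n i h f)

/-- The Demazure--Lascoux atom operator `ϖ̄_i := ϖ_i - 1`. -/
def DLbar (n i : ℕ) (h : i + 1 < n) (f : Rg n) : Rg n := DL n i h f - f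

lemma exactDiv_eq {n : ℕ} {d g c : Rg n} (hd : d ≠ 0) (hc : g = d * c) :
    exactDiv d g = c := by
  have h : ∃ c : Rg n, g = d * c := ⟨c, hc⟩
  rw [exactDiv, dif_pos h]
  exact mul_left_cancel₀ hd (by rw [← h.choose_spec, hc])

lemma X_sub_X_ne {n : ℕ} {i j : Fin n} (h : i ≠ j) : (X i - X j : Rg n) ≠ 0 :=
  fun he => h (MvPolynomial.X_injective (sub_eq_zero.mp he))

lemma X_sub_X_dvd_sub_rename {n : ℕ} (i j : Fin n) (f : Rg n) :
    (X i - X j : Rg n) ∣ f - rename (Equiv.swap i j) f := by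
  classical
  set I : Ideal (Rg n) := Ideal.span {(X i - X j : Rg n)} with hI
  rw [← Ideal.mem_span_singleton]
  have hxy : Ideal.Quotient.mk I (X i : Rg n) = Ideal.Quotient.mk I (X j) := by
    rw [Ideal.Quotient.eq]
    exact Ideal.subset_span rfl
  have key : (Ideal.Quotient.mk I).comp ((rename (Equiv.swap i j)).toRingHom : Rg n →+* Rg n)
      = Ideal.Quotient.mk I := by
    apply MvPolynomial.ringHom_ext
    · intro r
      simp [rename_C]
    · intro k
      simp only [RingHom.comp_apply, AlgHom.toRingHom_eq_coe, RingHom.coe_coe, rename_X]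
      rcases eq_or_ne k i with rfl | hki
      · rw [Equiv.swap_apply_left]; exact hxy.symm
      rcases eq_or_ne k j with rfl | hkj
      · rw [Equiv.swap_apply_right]; exact hxy
      · rw [Equiv.swap_apply_of_ne_of_ne hki hkj]
  have := congrArg (fun φ : Rg n →+* Rg n ⧸ I => φ f) key
  simp only [RingHom.comp_apply, AlgHom.toRingHom_eq_coe, RingHom.coe_coe] at this
  exact Ideal.Quotient.eq.mp this.symm

lemma mul_DL (n i : ℕ) (h : i + 1 < n) (f : Rg n) :
    (X (⟨i, by omega⟩ : Fin n) - X ⟨i + 1, h⟩) * DL n i h f = DLnum n i h f := by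
  have hne : (⟨i, by omega⟩ : Fin n) ≠ ⟨i + 1, h⟩ := by
    intro hh; have := congrArg Fin.val hh; simp at this
  obtain ⟨c, hc⟩ : (X (⟨i, by omega⟩ : Fin n) - X ⟨i + 1, h⟩) ∣ DLnum n i h f := by
    have h1 := X_sub_X_dvd_sub_rename (⟨i, by omega⟩ : Fin n) ⟨i + 1, h⟩ f
    have h2 : DLnum n i h f = (X (⟨i, by omega⟩ : Fin n) - X ⟨i + 1, h⟩) * f
        + (X ⟨i + 1, h⟩ + Bg n * X (⟨i, by omega⟩ : Fin n) * X ⟨i + 1, h⟩)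
          * (f - rename (Equiv.swap (⟨i, by omega⟩ : Fin n) ⟨i + 1, h⟩) f) := by
      rw [DLnum, sOp]; ring
    rw [h2]
    exact dvd_add (dvd_mul_right _ _) (h1.mul_left _)
  rw [DL, exactDiv_eq (X_sub_X_ne hne) hc]
  exact hc.symm

lemma mul_DL' (n i : ℕ) (h : i + 1 < n) (f : Rg n) :
    (X (⟨i, by omega⟩ : Fin n) - X ⟨i + 1, h⟩) * DL n i h f =
    (X (⟨i, by omega⟩ : Fin n) + Bg n * X (⟨i, by omega⟩ : Fin n) * X ⟨i + 1, h⟩) * f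
      - (X ⟨i + 1, h⟩ + Bg n * X (⟨i, by omega⟩ : Fin n) * X ⟨i + 1, h⟩)
        * rename (Equiv.swap (⟨i, by omega⟩ : Fin n) ⟨i + 1, h⟩) f := by
  rw [mul_DL]; rw [DLnum, sOp]

lemma rename_Bg {n : ℕ} (e : Fin n → Fin n) : rename e (Bg n) = Bg n := rename_C _ _

lemma swap_comp_self {α : Type*} [DecidableEq α] (a b : α) :
    (⇑(Equiv.swap a b)) ∘ (⇑(Equiv.swap a b)) = id :=
  funext fun x => Equiv.swap_apply_self a b x

lemma sOp_DL (n i : ℕ) (h : i + 1 < n) (f : Rg n) :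
    rename (Equiv.swap (⟨i, by omega⟩ : Fin n) ⟨i + 1, h⟩) (DL n i h f) = DL n i h f := by
  set a : Fin n := ⟨i, by omega⟩ with ha
  set b : Fin n := ⟨i + 1, h⟩ with hb
  have hne : a ≠ b := by
    intro hh; have := congrArg Fin.val hh; simp [ha, hb] at this
  have h1 := mul_DL' n i h f
  rw [← ha, ← hb] at h1
  have h2 := congrArg (rename (⇑(Equiv.swap a b))) h1
  simp only [map_sub, map_mul, map_add, rename_X, rename_rename, rename_Bg,
    Equiv.swap_apply_left, Equiv.swap_apply_right, swap_comp_self, rename_id, AlgHom.id_apply] at h2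
  exact mul_left_cancel₀ (X_sub_X_ne hne) (by linear_combination (-1 : Rg n) * h2 - h1)


lemma swap_braid {α : Type*} [DecidableEq α] {a b c : α} (hab : a ≠ b) (hac : a ≠ c)
    (hbc : b ≠ c) :
    (⇑(Equiv.swap a b)) ∘ (⇑(Equiv.swap b c)) ∘ (⇑(Equiv.swap a b)) =
    (⇑(Equiv.swap b c)) ∘ (⇑(Equiv.swap a b)) ∘ (⇑(Equiv.swap b c)) := by
  funext x
  simp only [Function.comp_apply]
  rcases eq_or_ne x a with rfl | hxa
  · simp only [Equiv.swap_apply_left, Equiv.swap_apply_right,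
      Equiv.swap_apply_of_ne_of_ne hab hac, Equiv.swap_apply_of_ne_of_ne hac.symm hbc.symm]
  rcases eq_or_ne x b with rfl | hxb
  · simp only [Equiv.swap_apply_left, Equiv.swap_apply_right,
      Equiv.swap_apply_of_ne_of_ne hab hac, Equiv.swap_apply_of_ne_of_ne hac.symm hbc.symm]
  rcases eq_or_ne x c with rfl | hxc
  · simp only [Equiv.swap_apply_left, Equiv.swap_apply_right,
      Equiv.swap_apply_of_ne_of_ne hab hac, Equiv.swap_apply_of_ne_of_ne hac.symm hbc.symm]
  · simp only [Equiv.swap_apply_of_ne_of_ne hxa hxb, Equiv.swap_apply_of_ne_of_ne hxb hxc]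

lemma swap_comp_comm {α : Type*} [DecidableEq α] {a b c d : α} (h1 : a ≠ c) (h2 : a ≠ d)
    (h3 : b ≠ c) (h4 : b ≠ d) :
    (⇑(Equiv.swap a b)) ∘ (⇑(Equiv.swap c d)) = (⇑(Equiv.swap c d)) ∘ (⇑(Equiv.swap a b)) := by
  funext x
  simp only [Function.comp_apply]
  rcases eq_or_ne x a with rfl | hxa
  · simp only [Equiv.swap_apply_left, Equiv.swap_apply_of_ne_of_ne h1 h2,
      Equiv.swap_apply_of_ne_of_ne h3 h4]
  rcases eq_or_ne x b with rfl | hxb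
  · simp only [Equiv.swap_apply_right, Equiv.swap_apply_of_ne_of_ne h1 h2,
      Equiv.swap_apply_of_ne_of_ne h3 h4]
  rcases eq_or_ne x c with rfl | hxc
  · simp only [Equiv.swap_apply_left, Equiv.swap_apply_of_ne_of_ne h1.symm h3.symm,
      Equiv.swap_apply_of_ne_of_ne h2.symm h4.symm]
  rcases eq_or_ne x d with rfl | hxd
  · simp only [Equiv.swap_apply_right, Equiv.swap_apply_of_ne_of_ne h1.symm h3.symm,
      Equiv.swap_apply_of_ne_of_ne h2.symm h4.symm]
  · simp only [Equiv.swap_apply_of_ne_of_ne hxa hxb, Equiv.swap_apply_of_ne_of_ne hxc hxd]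

lemma DL_comm_aux (n i j : ℕ) (hi : i + 1 < n) (hj : j + 1 < n) (hij : i + 1 < j)
    (f : Rg n) : DL n i hi (DL n j hj f) = DL n j hj (DL n i hi f) := by
  have hia : i < n := by omega
  have hja : j < n := by omega
  set a : Fin n := ⟨i, by omega⟩ with ha
  set b : Fin n := ⟨i + 1, hi⟩ with hb
  set c : Fin n := ⟨j, by omega⟩ with hc
  set d : Fin n := ⟨j + 1, hj⟩ with hd
  have hab : a ≠ b := by simp [ha, hb, Fin.ext_iff]
  have hcd : c ≠ d := by simp [hc, hd, Fin.ext_iff]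
  have hac : a ≠ c := by simp [ha, hc, Fin.ext_iff]; omega
  have had : a ≠ d := by simp [ha, hd, Fin.ext_iff]; omega
  have hbc : b ≠ c := by simp [hb, hc, Fin.ext_iff]; omega
  have hbd : b ≠ d := by simp [hb, hd, Fin.ext_iff]; omega
  have e1 : Equiv.swap c d a = a := Equiv.swap_apply_of_ne_of_ne hac had
  have e2 : Equiv.swap c d b = b := Equiv.swap_apply_of_ne_of_ne hbc hbd
  have e3 : Equiv.swap a b c = c := Equiv.swap_apply_of_ne_of_ne hac.symm hbc.symm
  have e4 : Equiv.swap a b d = d := Equiv.swap_apply_of_ne_of_ne had.symm hbd.symm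
  have hg1 := mul_DL' n i hi f
  rw [← ha, ← hb] at hg1
  have hsjg1 := congrArg (rename (⇑(Equiv.swap c d))) hg1
  simp only [map_sub, map_mul, map_add, rename_X, rename_rename, rename_Bg, e1, e2] at hsjg1
  have hg2 := mul_DL' n j hj (DL n i hi f)
  rw [← hc, ← hd] at hg2
  have hh1 := mul_DL' n j hj f
  rw [← hc, ← hd] at hh1
  have hsih1 := congrArg (rename (⇑(Equiv.swap a b))) hh1
  simp only [map_sub, map_mul, map_add, rename_X, rename_rename, rename_Bg, e3, e4] at hsih1
  have hh2 := mul_DL' n i hi (DL n j hj f)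
  rw [← ha, ← hb] at hh2
  have hcomm : rename ((⇑(Equiv.swap c d)) ∘ (⇑(Equiv.swap a b))) f =
      rename ((⇑(Equiv.swap a b)) ∘ (⇑(Equiv.swap c d))) f := by
    rw [swap_comp_comm hac had hbc hbd]
  have hQ : ((X a - X b) * (X c - X d) : Rg n) ≠ 0 :=
    mul_ne_zero (X_sub_X_ne hab) (X_sub_X_ne hcd)
  apply mul_left_cancel₀ hQ
  linear_combination (-(X a - X b) : Rg n) * hg2 - (X c + Bg n * X c * X d) * hg1
    + (X d + Bg n * X c * X d) * hsjg1 + (X c - X d) * hh2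
    + (X a + Bg n * X a * X b) * hh1 - (X b + Bg n * X a * X b) * hsih1
    - (X d + Bg n * X c * X d) * (X b + Bg n * X a * X b) * hcomm

lemma DL_braid (n i : ℕ) (hi : i + 1 + 1 < n) (hi' : i + 1 < n) (f : Rg n) :
    DL n i hi' (DL n (i + 1) hi (DL n i hi' f)) =
    DL n (i + 1) hi (DL n i hi' (DL n (i + 1) hi f)) := by
  set a : Fin n := ⟨i, by omega⟩ with ha
  set b : Fin n := ⟨i + 1, hi'⟩ with hb
  set c : Fin n := ⟨i + 1 + 1, hi⟩ with hc
  have hab : a ≠ b := by simp [ha, hb, Fin.ext_iff]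
  have hac : a ≠ c := by simp [ha, hc, Fin.ext_iff]; omega
  have hbc : b ≠ c := by simp [hb, hc, Fin.ext_iff]
  have eta : Equiv.swap b c a = a := Equiv.swap_apply_of_ne_of_ne hab hac
  have esc : Equiv.swap a b c = c := Equiv.swap_apply_of_ne_of_ne hac.symm hbc.symm
  -- LHS chain
  have hg1 := mul_DL' n i hi' f
  rw [← ha, ← hb] at hg1
  have htg1 := congrArg (rename (⇑(Equiv.swap b c))) hg1
  simp only [map_sub, map_mul, map_add, rename_X, rename_rename, rename_Bg, eta,
    Equiv.swap_apply_left, Equiv.swap_apply_right] at htg1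
  have hstg1 := congrArg (rename (⇑(Equiv.swap a b))) htg1
  simp only [map_sub, map_mul, map_add, rename_X, rename_rename, rename_Bg, esc,
    Equiv.swap_apply_left, Equiv.swap_apply_right] at hstg1
  have hsg1 : rename (⇑(Equiv.swap a b)) (DL n i hi' f) = DL n i hi' f := sOp_DL n i hi' f
  have hg2 := mul_DL' n (i + 1) hi (DL n i hi' f)
  rw [← hb, ← hc] at hg2
  have hsg2 := congrArg (rename (⇑(Equiv.swap a b))) hg2
  simp only [map_sub, map_mul, map_add, rename_X, rename_rename, rename_Bg, esc,
    Equiv.swap_apply_left, Equiv.swap_apply_right, hsg1] at hsg2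
  have hg3 := mul_DL' n i hi' (DL n (i + 1) hi (DL n i hi' f))
  rw [← ha, ← hb] at hg3
  -- RHS chain
  have hh1 := mul_DL' n (i + 1) hi f
  rw [← hb, ← hc] at hh1
  have hsh1 := congrArg (rename (⇑(Equiv.swap a b))) hh1
  simp only [map_sub, map_mul, map_add, rename_X, rename_rename, rename_Bg, esc,
    Equiv.swap_apply_left, Equiv.swap_apply_right] at hsh1
  have htsh1 := congrArg (rename (⇑(Equiv.swap b c))) hsh1
  simp only [map_sub, map_mul, map_add, rename_X, rename_rename, rename_Bg, eta,
    Equiv.swap_apply_left, Equiv.swap_apply_right] at htsh1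
  have hth1 : rename (⇑(Equiv.swap b c)) (DL n (i + 1) hi f) = DL n (i + 1) hi f :=
    sOp_DL n (i + 1) hi f
  have hh2 := mul_DL' n i hi' (DL n (i + 1) hi f)
  rw [← ha, ← hb] at hh2
  have hth2 := congrArg (rename (⇑(Equiv.swap b c))) hh2
  simp only [map_sub, map_mul, map_add, rename_X, rename_rename, rename_Bg, eta,
    Equiv.swap_apply_left, Equiv.swap_apply_right, hth1] at hth2
  have hh3 := mul_DL' n (i + 1) hi (DL n i hi' (DL n (i + 1) hi f))
  rw [← hb, ← hc] at hh3
  have hsts : rename ((⇑(Equiv.swap a b)) ∘ (⇑(Equiv.swap b c)) ∘ (⇑(Equiv.swap a b))) f =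
      rename ((⇑(Equiv.swap b c)) ∘ (⇑(Equiv.swap a b)) ∘ (⇑(Equiv.swap b c))) f := by
    rw [swap_braid hab hac hbc]
  have hQ : ((X a - X b) ^ 2 * (X b - X c) ^ 2 * (X a - X c) : Rg n) ≠ 0 :=
    mul_ne_zero (mul_ne_zero (pow_ne_zero _ (X_sub_X_ne hab)) (pow_ne_zero _ (X_sub_X_ne hbc)))
      (X_sub_X_ne hac)
  apply mul_left_cancel₀ hQ
  linear_combination
    (X a - X b) * (X b - X c) ^ 2 * (X a - X c) * hg3
    + (X a + Bg n * X a * X b) * (X a - X b) * (X a - X c) * (X b - X c) * hg2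
    - (X b + Bg n * X a * X b) * (X a - X b) * (X b - X c) ^ 2 * hsg2
    + ((X a + Bg n * X a * X b) * (X b + Bg n * X b * X c) * (X a - X c)
        - (X b + Bg n * X a * X b) * (X a + Bg n * X a * X c) * (X b - X c)) * (X b - X c) * hg1
    - (X a + Bg n * X a * X b) * (X c + Bg n * X b * X c) * (X a - X b) * (X b - X c) * htg1
    + (X b + Bg n * X a * X b) * (X c + Bg n * X a * X c) * (X a - X b) * (X b - X c) * hstg1
    - (X a - X b) ^ 2 * (X b - X c) * (X a - X c) * hh3
    - (X b + Bg n * X b * X c) * (X b - X c) * (X a - X c) * (X a - X b) * hh2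
    + (X c + Bg n * X b * X c) * (X a - X b) ^ 2 * (X b - X c) * hth2
    - ((X b + Bg n * X b * X c) * (X a + Bg n * X a * X b) * (X a - X c)
        - (X c + Bg n * X b * X c) * (X a + Bg n * X a * X c) * (X a - X b)) * (X a - X b) * hh1
    + (X b + Bg n * X b * X c) * (X b + Bg n * X a * X b) * (X b - X c) * (X a - X b) * hsh1
    - (X c + Bg n * X b * X c) * (X c + Bg n * X a * X c) * (X b - X c) * (X a - X b) * htsh1
    - (X b + Bg n * X a * X b) * (X c + Bg n * X a * X c) * (X c + Bg n * X b * X c)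
        * (X a - X b) * (X b - X c) * hsts


/-- the Demazure--Lascoux operators satisfy the 0-Hecke relations. -/
theorem stmt1 (n : ℕ) (hn : 2 ≤ n) :
    (∀ (i j : ℕ) (hi : i + 1 < n) (hj : j + 1 < n), (i + 1 < j ∨ j + 1 < i) →
      ∀ f : Rg n, DL n i hi (DL n j hj f) = DL n j hj (DL n i hi f)) ∧
    (∀ (i : ℕ) (hi : i + 1 + 1 < n), ∀ f : Rg n,
      DL n i (by omega) (DL n (i + 1) hi (DL n i (by omega) f)) =
        DL n (i + 1) hi (DL n i (by omega) (DL n (i + 1) hi f))) ∧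
    (∀ (i : ℕ) (hi : i + 1 < n), ∀ f : Rg n, DL n i hi (DL n i hi f) = DL n i hi f) := by
  refine ⟨?_, ?_, ?_⟩
  · intro i j hi hj hij f
    rcases hij with h | h
    · exact DL_comm_aux n i j hi hj h f
    · exact (DL_comm_aux n j i hj hi h f).symm
  · intro i hi f
    exact DL_braid n i hi (by omega) f
  · intro i hi f
    have hne : (⟨i, by omega⟩ : Fin n) ≠ ⟨i + 1, hi⟩ := by simp [Fin.ext_iff]
    have hsg1 : rename (⇑(Equiv.swap (⟨i, by omega⟩ : Fin n) ⟨i + 1, hi⟩)) (DL n i hi f) =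
        DL n i hi f := sOp_DL n i hi f
    have hg2 := mul_DL' n i hi (DL n i hi f)
    rw [hsg1] at hg2
    exact mul_left_cancel₀ (X_sub_X_ne hne) (by linear_combination hg2)
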